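/- Let G̃ = diag(g₁,…,gₙ) with all gᵢ ≠ 0, and K a symmetric n×n real matrix. A matrix Γ̃ satisfies G̃ Γ̃ + Γ̃ᵀ G̃ = K if and only if its components satisfy gᵢ Γ̃_{ij} + gⱼ Γ̃_{ji} = K_{ij} for all i,j. Moreover the general solution is Γ̃ = P + Q G̃ + R where Pᵀ = P, Qᵀ = −Q, Rᵀ = −R, with P_{ij} = K_{ij}/(gᵢ+gⱼ) and R_{ij} = 0 when gᵢ+gⱼ ≠ 0, and Q_{ij} = 0 and R_{ij} = K_{ij}/(2gᵢ) when gᵢ+gⱼ = 0, the remaining entries of P and Q arbitrary subject only to the stated symmetries. -/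

import Mathlib

/-!
Entrywise the equation reads `gᵢ Γᵢⱼ + gⱼ Γⱼᵢ = Kᵢⱼ`. For `Γ = P + Q G̃ + R` with `P` symmetric and
`Q`, `R` skew, the left side is `(gᵢ + gⱼ) Pᵢⱼ + (gᵢ - gⱼ) Rᵢⱼ`: the term `Q G̃` drops out. So the
prescribed `P` and `R` give a solution. Conversely, for a solution take `R` as prescribed,
`Qᵢⱼ = (Γᵢⱼ - Γⱼᵢ) / (gᵢ + gⱼ)` when `gᵢ + gⱼ ≠ 0`, and `P` the remainder; `P` is symmetric because
`K` is, and `K` is symmetric because the left side of the equation is.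
-/

open Matrix

variable {ι 𝕜 : Type*} [Fintype ι] [DecidableEq ι]

theorem diagonal_mul_add_transpose_mul_diagonal_apply [CommSemiring 𝕜] (g : ι → 𝕜)
    (X : Matrix ι ι 𝕜) (i j : ι) :
    (diagonal g * X + Xᵀ * diagonal g) i j = g i * X i j + g j * X j i := by
  simp [mul_comm]

theorem diagonal_mul_add_transpose_mul_diagonal_eq_iff [CommSemiring 𝕜] (g : ι → 𝕜)
    (X K : Matrix ι ι 𝕜) :
    diagonal g * X + Xᵀ * diagonal g = K ↔ ∀ i j, g i * X i j + g j * X j i = K i j := by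
  simp only [← Matrix.ext_iff, diagonal_mul_add_transpose_mul_diagonal_apply]

theorem isSymm_diagonal_mul_add_transpose_mul_diagonal [CommSemiring 𝕜] (g : ι → 𝕜)
    (X : Matrix ι ι 𝕜) : (diagonal g * X + Xᵀ * diagonal g).IsSymm := by
  simpa [transpose_mul] using isSymm_add_transpose_self (diagonal g * X)

theorem diagonal_mul_add_transpose_mul_diagonal_apply_of_decomposition [CommRing 𝕜] (g : ι → 𝕜)
    {P Q R : Matrix ι ι 𝕜} (hP : Pᵀ = P) (hQ : Qᵀ = -Q) (hR : Rᵀ = -R) (i j : ι) :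
    (diagonal g * (P + Q * diagonal g + R) + (P + Q * diagonal g + R)ᵀ * diagonal g) i j =
      (g i + g j) * P i j + (g i - g j) * R i j := by
  have hPji : P j i = P i j := congr_fun₂ hP i j
  have hQji : Q j i = -Q i j := by simpa using congr_fun₂ hQ i j
  have hRji : R j i = -R i j := by simpa using congr_fun₂ hR i j
  rw [diagonal_mul_add_transpose_mul_diagonal_apply]
  simp only [Matrix.add_apply, mul_diagonal, hPji, hQji, hRji]
  ring

def IsPQRDecomposition [Field 𝕜] (g : ι → 𝕜) (K Γ P Q R : Matrix ι ι 𝕜) : Prop :=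
  Pᵀ = P ∧ Qᵀ = -Q ∧ Rᵀ = -R ∧
    (∀ i j, g i + g j ≠ 0 → P i j = K i j / (g i + g j) ∧ R i j = 0) ∧
    (∀ i j, g i + g j = 0 → Q i j = 0 ∧ R i j = K i j / (2 * g i)) ∧
    Γ = P + Q * diagonal g + R

theorem IsPQRDecomposition.diagonal_mul_add_transpose_mul_diagonal_eq [Field 𝕜] [NeZero (2 : 𝕜)]
    {g : ι → 𝕜} (hg : ∀ i, g i ≠ 0) {K Γ P Q R : Matrix ι ι 𝕜}
    (h : IsPQRDecomposition g K Γ P Q R) : diagonal g * Γ + Γᵀ * diagonal g = K := by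
  obtain ⟨hP, hQ, hR, hne, heq, rfl⟩ := h
  ext i j
  rw [diagonal_mul_add_transpose_mul_diagonal_apply_of_decomposition g hP hQ hR]
  by_cases hc : g i + g j = 0
  · obtain ⟨-, hRij⟩ := heq i j hc
    have hgj : g j = -g i := eq_neg_of_add_eq_zero_right hc
    have hgi := hg i
    rw [hc, hRij, hgj]
    field_simp
    ring
  · obtain ⟨hPij, hRij⟩ := hne i j hc
    rw [hPij, hRij]
    field_simp
    ring

theorem exists_isPQRDecomposition [Field 𝕜] [NeZero (2 : 𝕜)]
    {g : ι → 𝕜} (hg : ∀ i, g i ≠ 0) {K Γ : Matrix ι ι 𝕜}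
    (hΓ : diagonal g * Γ + Γᵀ * diagonal g = K) : ∃ P Q R, IsPQRDecomposition g K Γ P Q R := by
  classical
  have hK : ∀ i j, K j i = K i j := hΓ ▸ (isSymm_diagonal_mul_add_transpose_mul_diagonal g Γ).apply
  have hΓij := (diagonal_mul_add_transpose_mul_diagonal_eq_iff g Γ K).1 hΓ
  set R : Matrix ι ι 𝕜 := of fun i j => if g i + g j = 0 then K i j / (2 * g i) else 0
  set Q : Matrix ι ι 𝕜 := of fun i j => if g i + g j = 0 then 0 else (Γ i j - Γ j i) / (g i + g j)
  refine ⟨Γ - Q * diagonal g - R, Q, R, ?_, ?_, ?_, fun i j hc => ?_, fun i j hc => ?_, by abel⟩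
  · ext i j
    simp only [transpose_apply, Matrix.sub_apply, mul_diagonal, Q, R, of_apply, add_comm (g j)]
    split_ifs with hc
    · have hgj : g j = -g i := eq_neg_of_add_eq_zero_right hc
      have hgi := hg i
      rw [hK, hgj]
      field_simp
      linear_combination (-2) * hΓij i j + 2 * Γ j i * hgj
    · field_simp
      ring
  · ext i j
    simp only [transpose_apply, Matrix.neg_apply, Q, of_apply, add_comm (g j)]
    split_ifs <;> ring
  · ext i j
    simp only [transpose_apply, Matrix.neg_apply, R, of_apply, add_comm (g j)]
    split_ifs with hc
    · rw [hK, eq_neg_of_add_eq_zero_right hc, mul_neg, div_neg]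
    · ring
  · simp only [Matrix.sub_apply, mul_diagonal, Q, R, of_apply, if_neg hc, and_true]
    field_simp
    linear_combination hΓij i j
  · simp [Q, R, hc]

theorem general_solution_of_metric_equation_general {n : ℕ}
    (g : Fin n → ℝ) (hg : ∀ i, g i ≠ 0)
    (K : Matrix (Fin n) (Fin n) ℝ)
    (Γ : Matrix (Fin n) (Fin n) ℝ) :
    ((Matrix.diagonal g * Γ + Γᵀ * Matrix.diagonal g = K) ↔
      (∀ i j : Fin n, g i * Γ i j + g j * Γ j i = K i j)) ∧
    ((Matrix.diagonal g * Γ + Γᵀ * Matrix.diagonal g = K) ↔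
      ∃ P Q R : Matrix (Fin n) (Fin n) ℝ,
        Pᵀ = P ∧ Qᵀ = -Q ∧ Rᵀ = -R ∧
        (∀ i j : Fin n, g i + g j ≠ 0 →
          P i j = K i j / (g i + g j) ∧ R i j = 0) ∧
        (∀ i j : Fin n, g i + g j = 0 →
          Q i j = 0 ∧ R i j = K i j / (2 * g i)) ∧
        Γ = P + Q * Matrix.diagonal g + R) :=
  ⟨diagonal_mul_add_transpose_mul_diagonal_eq_iff g Γ K,
    exists_isPQRDecomposition hg,
    fun ⟨_, _, _, h⟩ => IsPQRDecomposition.diagonal_mul_add_transpose_mul_diagonal_eq hg h⟩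

theorem general_solution_of_metric_equation {n : ℕ}
    (g : Fin n → ℝ) (hg : ∀ i, g i ≠ 0)
    (K : Matrix (Fin n) (Fin n) ℝ) (hK : Kᵀ = K)
    (Γ : Matrix (Fin n) (Fin n) ℝ) :
    ((Matrix.diagonal g * Γ + Γᵀ * Matrix.diagonal g = K) ↔
      (∀ i j : Fin n, g i * Γ i j + g j * Γ j i = K i j)) ∧
    ((Matrix.diagonal g * Γ + Γᵀ * Matrix.diagonal g = K) ↔
      ∃ P Q R : Matrix (Fin n) (Fin n) ℝ,
        Pᵀ = P ∧ Qᵀ = -Q ∧ Rᵀ = -R ∧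
        (∀ i j : Fin n, g i + g j ≠ 0 →
          P i j = K i j / (g i + g j) ∧ R i j = 0) ∧
        (∀ i j : Fin n, g i + g j = 0 →
          Q i j = 0 ∧ R i j = K i j / (2 * g i)) ∧
        Γ = P + Q * Matrix.diagonal g + R) :=
  general_solution_of_metric_equation_general g hg K Γ
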